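/- For each $j$ with $0 \le j \le N-2$, the function $u_j^{N,k}(x) := \frac{1}{j!}(\partial_z)^j\left(e^{zx}\phi^{N,k}(x,z)\right)\big|_{z=0}$ satisfies the ordinary differential equation $\left((\partial_x)^{N-1} - k e^x (k\partial_x + k-1)\cdots(k\partial_x + 1)\right)u_j^{N,k}(x) = 0$. -/

import Mathlib

/-- The model for functions `∑_d e^{dx} p_d(x)` (`p_d` polynomial): formal power series in
`q = eˣ` with coefficients polynomials in `x`. -/
noncomputable abbrev GFun : Type := PowerSeries (Polynomial ℚ)

/-- The derivative `∂ₓ` on `∑_d e^{dx} p_d(x)`: `(∂ₓ f)_d = d·p_d + p_d'`. -/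
noncomputable def Dop : GFun → GFun := fun f =>
  PowerSeries.mk fun d =>
    (d : Polynomial ℚ) * PowerSeries.coeff d f +
      Polynomial.derivative (PowerSeries.coeff d f)

/-- The operator `∏_{m=1}^{M} (k ∂ₓ + m)` (the factors commute, applied in order). -/
noncomputable def opProd (k : ℕ) : ℕ → GFun → GFun
  | 0 => id
  | M + 1 => fun f => k • Dop (opProd k M f) + (M + 1) • opProd k M f

/-- The coefficients `φ_d^{N,k}(z)` as power series in `z` (regular at `z = 0`). -/
noncomputable def phiPS (N k d : ℕ) : PowerSeries ℚ :=
  PowerSeries.C (((k * d).factorial : ℚ) / ((d.factorial : ℚ)) ^ N) *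
    (∏ i ∈ Finset.Icc 1 (k * d), (1 + PowerSeries.C ((k : ℚ) / (i : ℚ)) * PowerSeries.X)) *
    ((∏ i ∈ Finset.Icc 1 d, (1 + PowerSeries.C ((1 : ℚ) / (i : ℚ)) * PowerSeries.X)) ^ N)⁻¹

/-- `u_j^{N,k}(x) = (1/j!) (∂_z)^j (e^{zx} φ^{N,k}(x,z))|_{z=0}`: the coefficient of `e^{dx}`
is `∑_{a+b=j} (x^a/a!) ⬝ (coefficient of z^b in φ_d^{N,k})`. -/
noncomputable def uSol (N k j : ℕ) : GFun :=
  PowerSeries.mk fun d =>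
    ∑ a ∈ Finset.range (j + 1),
      Polynomial.C ((1 / (a.factorial : ℚ)) * PowerSeries.coeff (j - a) (phiPS N k d)) *
        Polynomial.X ^ a

/-!
The coefficient of `e^{dx}` in `u_j` is `[z^j] e^{zx} φ_d(z)`, and on such coefficients `∂ₓ`
acts as multiplication of `φ_d` by `d + z`; likewise `k∂ₓ + m` acts as `k(d + z) + m`.
So the ODE reduces, coefficient by coefficient, to the power series identity
`(d + 1 + z)^{N-1} φ_{d+1} = k ∏_{m=1}^{k-1} (k(d + z) + m) φ_d`, which is immediate from
`φ_d = ∏_{i=1}^{kd} (i + kz) / ∏_{i=1}^{d} (i + z)^N` since the top factor `m = k` is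
`k(d + 1 + z)`. For `d = 0` the left side is `z^{N-1} φ_0`, whose `z^j` coefficient vanishes
because `j < N - 1`.
-/

open Polynomial

theorem Finset.prod_Icc_one_add {M : Type*} [CommMonoid M] (f : ℕ → M) (a b : ℕ) :
    ∏ i ∈ Finset.Icc 1 (a + b), f i =
      (∏ i ∈ Finset.Icc 1 a, f i) * ∏ m ∈ Finset.Icc 1 b, f (a + m) := by
  induction b with
  | zero => simp
  | succ b ih =>
    rw [← add_assoc, Finset.prod_Icc_succ_top (by omega), ih, Finset.prod_Icc_succ_top (by omega),
      mul_assoc, add_assoc]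

theorem C_factorial_mul_prod_one_add_C_div_mul_X {K : Type*} [Field K] [CharZero K]
    (a : K) (n : ℕ) :
    PowerSeries.C (n.factorial : K) *
        ∏ i ∈ Finset.Icc 1 n, (1 + PowerSeries.C (a / i) * PowerSeries.X) =
      ∏ i ∈ Finset.Icc 1 n, ((i : PowerSeries K) + PowerSeries.C a * PowerSeries.X) := by
  induction n with
  | zero => simp
  | succ n ih =>
    rw [Finset.prod_Icc_succ_top (by omega), Finset.prod_Icc_succ_top (by omega), ← ih,
      Nat.factorial_succ, Nat.cast_mul, map_mul, ← map_natCast PowerSeries.C (n + 1)]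
    have hn : ((n + 1 : ℕ) : K) ≠ 0 := Nat.cast_ne_zero.mpr n.succ_ne_zero
    have hC : PowerSeries.C ((n + 1 : ℕ) : K) * PowerSeries.C (a / (n + 1 : ℕ)) =
        PowerSeries.C a := by
      rw [← map_mul, mul_div_cancel₀ _ hn]
    linear_combination (PowerSeries.C (n.factorial : K) *
      ∏ i ∈ Finset.Icc 1 n, (1 + PowerSeries.C (a / i) * PowerSeries.X)) * PowerSeries.X * hC

section CoeffExpMul

variable {K : Type*} [Field K]

/-- The coefficient of `z ^ j` in `e^{zx} ψ(z)`, a polynomial in `x`. -/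
noncomputable def coeffExpMul (j : ℕ) : PowerSeries K →ₗ[K] K[X] where
  toFun ψ := ∑ a ∈ Finset.range (j + 1),
    C ((1 / (a.factorial : K)) * PowerSeries.coeff (j - a) ψ) * X ^ a
  map_add' ψ χ := by
    simp only [map_add, mul_add, add_mul, Finset.sum_add_distrib]
  map_smul' c ψ := by
    simp only [PowerSeries.coeff_smul, smul_eq_mul, RingHom.id_apply, Finset.smul_sum,
      Polynomial.smul_eq_C_mul, ← mul_assoc, ← C_mul, mul_left_comm c]

theorem coeff_coeffExpMul (j : ℕ) (ψ : PowerSeries K) (n : ℕ) :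
    (coeffExpMul j ψ).coeff n =
      if n ≤ j then (n.factorial : K)⁻¹ * PowerSeries.coeff (j - n) ψ else 0 := by
  simp only [coeffExpMul, LinearMap.coe_mk, AddHom.coe_mk, finsetSum_coeff, coeff_C_mul,
    coeff_X_pow, mul_ite, mul_one, mul_zero, Finset.sum_ite_eq, Finset.mem_range,
    Nat.lt_succ_iff, one_div]

theorem coeffExpMul_X_pow_mul {j p : ℕ} (h : j < p) (ψ : PowerSeries K) :
    coeffExpMul j (PowerSeries.X ^ p * ψ) = 0 := by
  ext n
  rw [coeff_coeffExpMul, coeff_zero]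
  split
  · rw [PowerSeries.X_pow_dvd_iff.mp (dvd_mul_right _ ψ) (j - n) (by omega), mul_zero]
  · rfl

/-- The operator `e^{-dx} ∂ₓ e^{dx}`. -/
noncomputable def conjDeriv (d : ℕ) (p : K[X]) : K[X] :=
  d * p + derivative p

theorem conjDeriv_coeffExpMul [CharZero K] (d j : ℕ) (ψ : PowerSeries K) :
    conjDeriv d (coeffExpMul j ψ) =
      coeffExpMul j (((d : PowerSeries K) + PowerSeries.X) * ψ) := by
  ext n
  rw [conjDeriv, add_mul, map_add, coeff_add, coeff_natCast_mul, coeff_derivative,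
    coeff_add, coeff_coeffExpMul, coeff_coeffExpMul, coeff_coeffExpMul, coeff_coeffExpMul,
    ← map_natCast PowerSeries.C, PowerSeries.coeff_C_mul]
  split_ifs
  · rw [show j - n = j - (n + 1) + 1 by omega, PowerSeries.coeff_succ_X_mul,
      Nat.factorial_succ, Nat.cast_mul, mul_inv, Nat.cast_succ]
    field_simp
  · rw [show j - n = 0 by omega, PowerSeries.coeff_zero_X_mul]
    ring
  · omega
  · ring

theorem conjDeriv_iterate_coeffExpMul [CharZero K] (d j n : ℕ) (ψ : PowerSeries K) :
    (conjDeriv d)^[n] (coeffExpMul j ψ) =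
      coeffExpMul j (((d : PowerSeries K) + PowerSeries.X) ^ n * ψ) := by
  induction n with
  | zero => simp
  | succ n ih =>
    rw [Function.iterate_succ_apply', ih, conjDeriv_coeffExpMul, ← mul_assoc, ← pow_succ']

end CoeffExpMul

local notation "z" => (PowerSeries.X : PowerSeries ℚ)

theorem coeff_Dop_iterate (n : ℕ) (f : GFun) (d : ℕ) :
    PowerSeries.coeff d (Dop^[n] f) = (conjDeriv d)^[n] (PowerSeries.coeff d f) := by
  induction n generalizing f with
  | zero => rfl
  | succ n ih =>
    rw [Function.iterate_succ_apply, Function.iterate_succ_apply, ih]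
    simp only [Dop, PowerSeries.coeff_mk, conjDeriv]

theorem coeff_opProd (k M d j : ℕ) {f : GFun} {ψ : PowerSeries ℚ}
    (hf : PowerSeries.coeff d f = coeffExpMul j ψ) :
    PowerSeries.coeff d (opProd k M f) = coeffExpMul j
      ((∏ m ∈ Finset.Icc 1 M, ((k : PowerSeries ℚ) * (d + z) + m)) * ψ) := by
  induction M with
  | zero => simpa [opProd] using hf
  | succ M ih =>
    have hDop : PowerSeries.coeff d (Dop (opProd k M f)) =
        conjDeriv d (PowerSeries.coeff d (opProd k M f)) := coeff_Dop_iterate 1 _ d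
    rw [opProd, map_add, map_nsmul, map_nsmul, hDop, ih, conjDeriv_coeffExpMul,
      ← map_nsmul, ← map_nsmul, ← map_add, Finset.prod_Icc_succ_top (by omega)]
    congr 1
    simp only [nsmul_eq_mul]
    push_cast
    ring

theorem coeff_uSol (N k j d : ℕ) :
    PowerSeries.coeff d (uSol N k j) = coeffExpMul j (phiPS N k d) := by
  simp [uSol, coeffExpMul]

noncomputable def phiNum (k d : ℕ) : PowerSeries ℚ :=
  ∏ i ∈ Finset.Icc 1 (k * d), ((i : PowerSeries ℚ) + k * z)

noncomputable def phiDen (d : ℕ) : PowerSeries ℚ :=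
  ∏ i ∈ Finset.Icc 1 d, ((i : PowerSeries ℚ) + z)

theorem constantCoeff_phiDen_ne_zero (d : ℕ) : PowerSeries.constantCoeff (phiDen d) ≠ 0 := by
  rw [phiDen, map_prod, Finset.prod_ne_zero_iff]
  intro i hi
  simp only [map_add, map_natCast, PowerSeries.constantCoeff_X, add_zero, Nat.cast_ne_zero]
  exact Nat.one_le_iff_ne_zero.mp (Finset.mem_Icc.mp hi).1

theorem phiPS_mul_phiDen_pow (N k d : ℕ) : phiPS N k d * phiDen d ^ N = phiNum k d := by
  set A := ∏ i ∈ Finset.Icc 1 (k * d), (1 + PowerSeries.C ((k : ℚ) / i) * z)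
  set B := ∏ i ∈ Finset.Icc 1 d, (1 + PowerSeries.C ((1 : ℚ) / i) * z)
  have hA : phiNum k d = PowerSeries.C ((k * d).factorial : ℚ) * A := by
    rw [C_factorial_mul_prod_one_add_C_div_mul_X, phiNum, map_natCast]
  have hB : phiDen d = PowerSeries.C (d.factorial : ℚ) * B := by
    rw [C_factorial_mul_prod_one_add_C_div_mul_X, phiDen, map_one, one_mul]
  have hBinv : (B ^ N)⁻¹ * B ^ N = 1 := PowerSeries.inv_mul_cancel _ (by simp [B, map_prod])
  have hc : PowerSeries.C (((k * d).factorial : ℚ) / (d.factorial : ℚ) ^ N) *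
      PowerSeries.C (d.factorial : ℚ) ^ N = PowerSeries.C ((k * d).factorial : ℚ) := by
    rw [← map_pow, ← map_mul, div_mul_cancel₀ _ (pow_ne_zero _ (by positivity))]
  rw [hA, hB, phiPS, mul_pow, ← hc]
  linear_combination PowerSeries.C (((k * d).factorial : ℚ) / (d.factorial : ℚ) ^ N) *
    PowerSeries.C (d.factorial : ℚ) ^ N * A * hBinv

theorem phiNum_succ (k e : ℕ) :
    phiNum k (e + 1) =
      phiNum k e * ∏ m ∈ Finset.Icc 1 k, ((k : PowerSeries ℚ) * (e + z) + m) := by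
  rw [phiNum, phiNum, mul_add_one, Finset.prod_Icc_one_add]
  congr 1
  refine Finset.prod_congr rfl fun m _ => ?_
  push_cast
  ring

theorem phiDen_succ (e : ℕ) :
    phiDen (e + 1) = phiDen e * (((e + 1 : ℕ) : PowerSeries ℚ) + z) :=
  Finset.prod_Icc_succ_top (by omega) _

theorem pow_mul_phiPS_succ {N k : ℕ} (hN : 1 ≤ N) (hk : 1 ≤ k) (e : ℕ) :
    (((e + 1 : ℕ) : PowerSeries ℚ) + z) ^ (N - 1) * phiPS N k (e + 1) =
      k * ((∏ m ∈ Finset.Icc 1 (k - 1), ((k : PowerSeries ℚ) * (e + z) + m)) *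
        phiPS N k e) := by
  obtain ⟨n, rfl⟩ : ∃ n, N = n + 1 := ⟨N - 1, by omega⟩
  obtain ⟨k, rfl⟩ : ∃ k', k = k' + 1 := ⟨k - 1, by omega⟩
  have hden : phiDen (e + 1) ^ (n + 1) ≠ 0 := pow_ne_zero _ fun h =>
    constantCoeff_phiDen_ne_zero (e + 1) (by rw [h, map_zero])
  apply mul_right_cancel₀ hden
  have hsucc := phiPS_mul_phiDen_pow (n + 1) (k + 1) (e + 1)
  have hprev := phiPS_mul_phiDen_pow (n + 1) (k + 1) e
  rw [phiNum_succ, Finset.prod_Icc_succ_top (by omega)] at hsucc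
  rw [phiDen_succ] at hsucc ⊢
  simp only [Nat.add_sub_cancel, mul_pow] at hsucc ⊢
  push_cast at hsucc ⊢
  linear_combination ((e : PowerSeries ℚ) + 1 + z) ^ n * hsucc - ((k : PowerSeries ℚ) + 1) *
    (∏ m ∈ Finset.Icc 1 k, (((k : PowerSeries ℚ) + 1) * (e + z) + m)) *
    ((e : PowerSeries ℚ) + 1 + z) ^ (n + 1) * hprev

/-- For `0 ≤ j ≤ N-2`, the function `u_j^{N,k}` satisfies the Givental ODE
`((∂ₓ)^{N-1} - k eˣ (k∂ₓ+k-1)⋯(k∂ₓ+1)) u_j = 0`. -/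
theorem stmt_1 (N k : ℕ) (hN : 2 ≤ N) (hk : 1 ≤ k) (j : ℕ) (hj : j ≤ N - 2) :
    Dop^[N - 1] (uSol N k j) -
      k • (PowerSeries.X * opProd k (k - 1) (uSol N k j)) = 0 := by
  rw [sub_eq_zero]
  ext1 d
  rw [coeff_Dop_iterate, coeff_uSol, conjDeriv_iterate_coeffExpMul, map_nsmul]
  cases d with
  | zero =>
    rw [PowerSeries.coeff_zero_X_mul, smul_zero, Nat.cast_zero, zero_add]
    exact coeffExpMul_X_pow_mul (by omega) _
  | succ e =>
    rw [PowerSeries.coeff_succ_X_mul, coeff_opProd k (k - 1) e j (coeff_uSol N k j e),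
      ← map_nsmul, nsmul_eq_mul, pow_mul_phiPS_succ (by omega) hk]
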